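/- arXiv:1603.03887 — 2 statements merged into one kernel-verified Lean document; each statement's English description precedes it below -/
import Mathlib

section
/- Let n ∈ ℕ with #_1(c_1…c_{n-1}) even. Let s, u, t ∈ {0,1}^{-ℕ} be admissible with s ≺_L u ≺_L t, s_{-(n-1)}…s_{-1} = t_{-(n-1)}…t_{-1} = c_1…c_{n-1}, and s_{-n} ≠ t_{-n}. Then u_{-(n-1)}…u_{-1} = c_1…c_{n-1} and sup π_0(A(u)) ≤ T^n(c). -/
/-- `T : ℝ → ℝ` is a unimodal map on `[0,1]` with critical point `c`. -/
def IsUnimodal (T : ℝ → ℝ) (c : ℝ) : Prop :=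
  ContinuousOn T (Set.Icc 0 1) ∧ Set.MapsTo T (Set.Icc 0 1) (Set.Icc 0 1) ∧
    T 0 = 0 ∧ 0 < c ∧ c < 1 ∧
    StrictMonoOn T (Set.Icc 0 c) ∧ StrictAntiOn T (Set.Icc c 1)

-- Symbols `0, *, 1` are encoded as `(0 : Fin 3), (1 : Fin 3), (2 : Fin 3)`
-- respectively; this realizes the order `0 < * < 1`.
open Classical in
/-- The raw (unmodified) itinerary of `x`: the `n`-th symbol is `0` if `Tⁿ(x) < c`,
`*` if `Tⁿ(x) = c` and `1` if `Tⁿ(x) > c`. -/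
noncomputable def rawItin (T : ℝ → ℝ) (c : ℝ) (x : ℝ) : ℕ → Fin 3 := fun n =>
  if T^[n] x < c then 0 else if T^[n] x = c then 1 else 2

/-- The number of `1`s among the first `k` symbols of `s`. -/
def onesCount (s : ℕ → Fin 3) (k : ℕ) : ℕ :=
  ((Finset.range k).filter fun i => s i = 2).card

/-- The (strict) parity-lexicographical ordering on `{0,*,1}^ℕ`. -/
def PlexLt (s t : ℕ → Fin 3) : Prop :=
  ∃ k : ℕ, (∀ i < k, s i = t i) ∧ s k ≠ t k ∧
    ((s k < t k ∧ Even (onesCount s k)) ∨ (t k < s k ∧ Odd (onesCount s k)))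

/-- The parity-lexicographical ordering `⪯`. -/
def PlexLe (s t : ℕ → Fin 3) : Prop := PlexLt s t ∨ s = t

open Classical in
/-- The (modified) kneading sequence `ν = c₁c₂… = I(T(c))`: if the critical point is
periodic, so that the raw itinerary of `T(c)` contains `*` (first at index `n-1`, whence it
is `(c₁…c_{n-1}*)^∞`), then `ν` is the parity-lexicographically smaller of
`(c₁…c_{n-1}0)^∞` and `(c₁…c_{n-1}1)^∞`. -/
noncomputable def kneading (T : ℝ → ℝ) (c : ℝ) : ℕ → Fin 3 :=
  if h : ∃ i, rawItin T c (T c) i = 1 then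
    let n := Nat.find h + 1
    let w : Fin 3 → ℕ → Fin 3 := fun b j =>
      if j % n = n - 1 then b else rawItin T c (T c) (j % n)
    if PlexLe (w 0) (w 2) then w 0 else w 2
  else rawItin T c (T c)

open Classical in
/-- The modified itinerary of `x`: it agrees with the raw itinerary up to the first
occurrence of `*` (if any), and after that first `*` it continues with the modified
kneading sequence `ν`. -/
noncomputable def itin (T : ℝ → ℝ) (c : ℝ) (x : ℝ) : ℕ → Fin 3 :=
  if h : ∃ i, T^[i] x = c then
    fun n =>
      if n < Nat.find h then rawItin T c x n
      else if n = Nat.find h then 1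
      else kneading T c (n - Nat.find h - 1)
  else rawItin T c x


/-- The inverse limit `X = lim←([0,1], T)`, modelled as sequences
`x : ℕ → ℝ` where `x n` represents the coordinate `x_{-n}`. -/
def invLimitSet (T : ℝ → ℝ) : Set (ℕ → ℝ) :=
  {x | (∀ n, x n ∈ Set.Icc (0 : ℝ) 1) ∧ ∀ n, T (x (n + 1)) = x n}

/-- Encoding of the two-element alphabet `{0,1}` into `{0,*,1}`:
`false ↦ 0` and `true ↦ 1` (i.e. `(2 : Fin 3)`). -/
def b2f (b : Bool) : Fin 3 := if b then 2 else 0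

/-- A left-infinite sequence `s = …s_{-2}s_{-1} ∈ {0,1}^{-ℕ}` is modelled as
`s : ℕ → Bool` with `s i` representing `s_{-(i+1)}`. It is admissible if every finite
subword `s_{-(m+1)} … s_{-1}` of it occurs in the (modified) itinerary of some point
of `[0,1]`. -/
def AdmissibleLeft (T : ℝ → ℝ) (c : ℝ) (s : ℕ → Bool) : Prop :=
  ∀ m : ℕ, ∃ x ∈ Set.Icc (0 : ℝ) 1, ∃ p : ℕ,
    ∀ j ≤ m, itin T c x (p + j) = b2f (s (m - j))

/-- The word condition `s_{-(n-1)} … s_{-1} = c₁ … c_{n-1}`, where `ν = c₁c₂…` is the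
(modified) kneading sequence, i.e. `c_j = kneading T c (j-1)`; for `n = 1` it is vacuous. -/
noncomputable def PrefixMatch (T : ℝ → ℝ) (c : ℝ) (s : ℕ → Bool) (n : ℕ) : Prop :=
  ∀ i, i < n - 1 → b2f (s i) = kneading T c (n - 2 - i)

/-- `#_1(c₁…c_k)`: the number of `1`s among the first `k` entries of the kneading sequence. -/
noncomputable def kneadOnes (T : ℝ → ℝ) (c : ℝ) (k : ℕ) : ℕ :=
  ((Finset.range k).filter fun j => kneading T c j = 2).card

/-- The set `{n > 1 : s_{-(n-1)}…s_{-1} = c₁…c_{n-1}, #_1(c₁…c_{n-1}) odd}`;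
`τ_L(s)` is its supremum. -/
def tauLSet (T : ℝ → ℝ) (c : ℝ) (s : ℕ → Bool) : Set ℕ :=
  {n | 1 < n ∧ PrefixMatch T c s n ∧ Odd (kneadOnes T c (n - 1))}

/-- The set `{n ≥ 1 : s_{-(n-1)}…s_{-1} = c₁…c_{n-1}, #_1(c₁…c_{n-1}) even}`;
`τ_R(s)` is its supremum. -/
def tauRSet (T : ℝ → ℝ) (c : ℝ) (s : ℕ → Bool) : Set ℕ :=
  {n | 1 ≤ n ∧ PrefixMatch T c s n ∧ Even (kneadOnes T c (n - 1))}

/-- `x_i` matches the symbol `s_i ∈ {0,1}` : either `x_i` lies strictly on the side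
of `c` prescribed by `s_i`, or `x_i = c` (in which case, after the identifications of
itineraries containing `*`, the coordinate matches both symbols). -/
def SymMatch (c y : ℝ) (b : Bool) : Prop :=
  y = c ∨ (y < c ∧ b = false) ∨ (c < y ∧ b = true)

/-- The basic arc `A(s) = {x ∈ X : ν_i(x) = s_i for all i < 0}` of an admissible
left-infinite sequence `s`. -/
def basicArc (T : ℝ → ℝ) (c : ℝ) (s : ℕ → Bool) : Set (ℕ → ℝ) :=
  {x | x ∈ invLimitSet T ∧ ∀ i : ℕ, SymMatch c (x (i + 1)) (s i)}

/-- The projection `π₀` of the inverse limit to the `0`-th coordinate. -/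
def proj0 (x : ℕ → ℝ) : ℝ := x 0

-- A left-infinite sequence `s = …s_{-2}s_{-1} ∈ {0,1}^{-ℕ}` is modelled as
-- `s : ℕ → Bool`, with `s i` representing the entry `s_{-(i+1)}`.

/-- `#_1(s_{-k} … s_{-1})`: the number of `1`s among the first `k` entries
(counted from the right) of the left-infinite sequence `s`. -/
def numOnes (s : ℕ → Bool) (k : ℕ) : ℕ :=
  ((Finset.range k).filter fun i => s i = true).card

/-- The ordering `≺_L` on `{0,1}^{-ℕ}` determined by `L`: if `k` (a 0-based index,
so `k+1` is the paper's `k`) is minimal with `s_{-(k+1)} ≠ t_{-(k+1)}`, then `s ≺_L t`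
iff either `t_{-(k+1)} = l_{-(k+1)}` and `#_1(s_{-k}…s_{-1}) - #_1(l_{-k}…l_{-1})` is
even, or `s_{-(k+1)} = l_{-(k+1)}` and that difference is odd. (A difference of
naturals is even/odd exactly when their sum is, which is how parity is phrased here.) -/
def LOrd (L : ℕ → Bool) (s t : ℕ → Bool) : Prop :=
  ∃ k : ℕ, (∀ i < k, s i = t i) ∧ s k ≠ t k ∧
    ((t k = L k ∧ Even (numOnes s k + numOnes L k)) ∨
     (s k = L k ∧ Odd (numOnes s k + numOnes L k)))

section Aux

lemma b2f_inj {a b : Bool} (h : b2f a = b2f b) : a = b := by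
  cases a <;> cases b <;> simp [b2f] at h ⊢

lemma rawItin_zero {T : ℝ → ℝ} {c z : ℝ} {i : ℕ} (h : rawItin T c z i = 0) :
    T^[i] z < c := by
  unfold rawItin at h
  split_ifs at h with h1 h2
  · exact h1
  all_goals exact absurd h (by decide)

lemma rawItin_one {T : ℝ → ℝ} {c z : ℝ} {i : ℕ} (h : rawItin T c z i = 1) :
    T^[i] z = c := by
  unfold rawItin at h
  split_ifs at h with h1 h2
  · exact absurd h (by decide)
  · exact h2
  · exact absurd h (by decide)

lemma rawItin_two {T : ℝ → ℝ} {c z : ℝ} {i : ℕ} (h : rawItin T c z i = 2) :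
    c < T^[i] z := by
  unfold rawItin at h
  split_ifs at h with h1 h2
  · exact absurd h (by decide)
  · exact absurd h (by decide)
  · exact lt_of_le_of_ne (le_of_not_gt h1) (fun hh => h2 hh.symm)

lemma iterate_mod_eq {f : ℝ → ℝ} {x : ℝ} {p : ℕ} (hp : f^[p] x = x) (j : ℕ) :
    f^[j] x = f^[j % p] x := by
  conv_lhs => rw [← Nat.mod_add_div j p]
  rw [Function.iterate_add_apply, Function.iterate_mul,
    Function.iterate_fixed hp (j / p)]

lemma fin3_cases {a : Fin 3} (h : a ≠ 1) : a = 0 ∨ a = 2 := by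
  revert h; revert a; decide

/-- The key structural facts about the modified kneading sequence. -/
lemma kneading_spec (T : ℝ → ℝ) (c : ℝ) (m : ℕ) :
    kneading T c m ≠ 1 ∧ (kneading T c m = 0 → T^[m] (T c) ≤ c) ∧
      (kneading T c m = 2 → c ≤ T^[m] (T c)) := by
  by_cases h : ∃ i, rawItin T c (T c) i = 1
  · have hfix : T^[Nat.find h] (T c) = c := rawItin_one (Nat.find_spec h)
    have hper : T^[Nat.find h + 1] (T c) = T c := by
      rw [Function.iterate_succ_apply', hfix]
    have hmod : T^[m] (T c) = T^[m % (Nat.find h + 1)] (T c) := iterate_mod_eq hper m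
    have hk : kneading T c m =
        (if m % (Nat.find h + 1) = Nat.find h + 1 - 1 then (0 : Fin 3)
          else rawItin T c (T c) (m % (Nat.find h + 1))) ∨
        kneading T c m =
        (if m % (Nat.find h + 1) = Nat.find h + 1 - 1 then (2 : Fin 3)
          else rawItin T c (T c) (m % (Nat.find h + 1))) := by
      unfold kneading
      rw [dif_pos h]
      by_cases hp : PlexLe
          (fun j => if j % (Nat.find h + 1) = Nat.find h + 1 - 1 then (0 : Fin 3)
            else rawItin T c (T c) (j % (Nat.find h + 1)))
          (fun j => if j % (Nat.find h + 1) = Nat.find h + 1 - 1 then (2 : Fin 3)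
            else rawItin T c (T c) (j % (Nat.find h + 1)))
      · left; simp only [if_pos hp]
      · right; simp only [if_neg hp]
    by_cases hm : m % (Nat.find h + 1) = Nat.find h + 1 - 1
    · have heq : T^[m] (T c) = c := by
        rw [hmod, hm]; simpa using hfix
      rcases hk with hk | hk <;> rw [hk, if_pos hm] <;>
        exact ⟨by decide, fun _ => heq.le, fun _ => heq.ge⟩
    · have hlt : m % (Nat.find h + 1) < Nat.find h := by
        have h1 : m % (Nat.find h + 1) < Nat.find h + 1 := Nat.mod_lt _ (by omega)
        have h2 : m % (Nat.find h + 1) ≠ Nat.find h := by simpa using hm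
        omega
      have hne : rawItin T c (T c) (m % (Nat.find h + 1)) ≠ 1 :=
        Nat.find_min h hlt
      have hkr : kneading T c m = rawItin T c (T c) (m % (Nat.find h + 1)) := by
        rcases hk with hk | hk <;> rw [hk, if_neg hm]
      refine ⟨by rw [hkr]; exact hne, ?_, ?_⟩
      · intro h0; rw [hkr] at h0
        rw [hmod]; exact (rawItin_zero h0).le
      · intro h2; rw [hkr] at h2
        rw [hmod]; exact (rawItin_two h2).le
  · have hk : kneading T c m = rawItin T c (T c) m := by
      unfold kneading; rw [dif_neg h]
    rw [hk]
    push_neg at h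
    exact ⟨h m, fun h0 => (rawItin_zero h0).le, fun h2 => (rawItin_two h2).le⟩

lemma kneadOnes_succ (T : ℝ → ℝ) (c : ℝ) (m : ℕ) :
    kneadOnes T c (m + 1) =
      kneadOnes T c m + (if kneading T c m = 2 then 1 else 0) := by
  unfold kneadOnes
  rw [Finset.range_add_one, Finset.filter_insert]
  split_ifs with hm
  · rw [Finset.card_insert_of_notMem (by simp)]
  · rfl

lemma le_Tc {T : ℝ → ℝ} {c : ℝ} (hT : IsUnimodal T c) {x : ℝ}
    (hx : x ∈ Set.Icc (0:ℝ) 1) : T x ≤ T c := by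
  obtain ⟨-, -, -, hc0, hc1, hmono, hanti⟩ := hT
  rcases le_or_gt x c with h | h
  · rcases eq_or_lt_of_le h with h' | h'
    · rw [h']
    · exact (hmono ⟨hx.1, h⟩ ⟨hc0.le, le_rfl⟩ h').le
  · exact (hanti ⟨le_rfl, hc1.le⟩ ⟨h.le, hx.2⟩ h).le

lemma mono_le {T : ℝ → ℝ} {c : ℝ} (hT : IsUnimodal T c) {a b : ℝ}
    (ha : 0 ≤ a) (hab : a ≤ b) (hb : b ≤ c) : T a ≤ T b := by
  rcases eq_or_lt_of_le hab with rfl | h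
  · exact le_rfl
  · exact (hT.2.2.2.2.2.1 ⟨ha, hab.trans hb⟩ ⟨ha.trans hab, hb⟩ h).le

lemma anti_le {T : ℝ → ℝ} {c : ℝ} (hT : IsUnimodal T c) {a b : ℝ}
    (ha : c ≤ a) (hab : a ≤ b) (hb : b ≤ 1) : T b ≤ T a := by
  rcases eq_or_lt_of_le hab with rfl | h
  · exact le_rfl
  · exact (hT.2.2.2.2.2.2 ⟨ha, hab.trans hb⟩ ⟨ha.trans hab, hb⟩ h).le

/-- The main inductive comparison lemma. -/
lemma mainInd (T : ℝ → ℝ) (c : ℝ) (hT : IsUnimodal T c) {y : ℝ}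
    (hy : y ∈ Set.Icc (0:ℝ) 1) (hyT : y ≤ T c) (M : ℕ)
    (hsym : ∀ j < M, T^[j] y = c ∨ (T^[j] y < c ∧ kneading T c j = 0) ∨
      (c < T^[j] y ∧ kneading T c j = 2)) :
    ∀ m, m ≤ M →
      (Even (kneadOnes T c m) → T^[m] y ≤ T^[m] (T c)) ∧
      (Odd (kneadOnes T c m) → T^[m] (T c) ≤ T^[m] y) := by
  have hc01 : c ∈ Set.Icc (0:ℝ) 1 := ⟨hT.2.2.2.1.le, hT.2.2.2.2.1.le⟩
  have hTc01 : T c ∈ Set.Icc (0:ℝ) 1 := hT.2.1 hc01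
  intro m
  induction m with
  | zero =>
    intro _
    refine ⟨fun _ => by simpa using hyT, fun hodd => absurd hodd ?_⟩
    simp [kneadOnes, Nat.odd_iff]
  | succ m ih =>
    intro hm
    obtain ⟨ihE, ihO⟩ := ih (Nat.le_of_succ_le hm)
    have hy' : T^[m] y ∈ Set.Icc (0:ℝ) 1 := (hT.2.1.iterate m) hy
    have hz' : T^[m] (T c) ∈ Set.Icc (0:ℝ) 1 := (hT.2.1.iterate m) hTc01
    obtain ⟨hne1, h0, h2⟩ := kneading_spec T c m
    have hyc0 : kneading T c m = 0 → T^[m] y ≤ c := by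
      intro hk
      rcases hsym m (Nat.lt_of_succ_le hm) with h | ⟨h, -⟩ | ⟨-, h⟩
      · exact h.le
      · exact h.le
      · rw [hk] at h; exact absurd h (by decide)
    have hyc2 : kneading T c m = 2 → c ≤ T^[m] y := by
      intro hk
      rcases hsym m (Nat.lt_of_succ_le hm) with h | ⟨-, h⟩ | ⟨h, -⟩
      · exact h.ge
      · rw [hk] at h; exact absurd h (by decide)
      · exact h.le
    rw [Function.iterate_succ_apply' T m y, Function.iterate_succ_apply' T m (T c)]
    rcases fin3_cases hne1 with hk | hk
    · have hcount : kneadOnes T c (m + 1) = kneadOnes T c m := by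
        rw [kneadOnes_succ, hk]; simp
      rw [hcount]
      exact ⟨fun hEv => mono_le hT hy'.1 (ihE hEv) (h0 hk),
             fun hOd => mono_le hT hz'.1 (ihO hOd) (hyc0 hk)⟩
    · have hcount : kneadOnes T c (m + 1) = kneadOnes T c m + 1 := by
        rw [kneadOnes_succ, hk]; simp
      constructor
      · intro hEv
        have hOd : Odd (kneadOnes T c m) := by
          rw [hcount, Nat.even_add_one, Nat.not_even_iff_odd] at hEv; exact hEv
        exact anti_le hT (h2 hk) (ihO hOd) hy'.2
      · intro hOd
        have hEv : Even (kneadOnes T c m) := by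
          rw [hcount] at hOd
          rcases Nat.even_or_odd (kneadOnes T c m) with h | h
          · exact h
          · exact absurd hOd (by simp [Nat.odd_iff, Nat.even_iff] at h ⊢; omega)
        exact anti_le hT (hyc2 hk) (ihE hEv) hz'.2

end Aux

/-- Let `n ≥ 1` with `#_1(c₁…c_{n-1})` even, and let `s ≺_L u ≺_L t` be admissible with
`s_{-(n-1)}…s_{-1} = t_{-(n-1)}…t_{-1} = c₁…c_{n-1}` and `s_{-n} ≠ t_{-n}`. Then also
`u_{-(n-1)}…u_{-1} = c₁…c_{n-1}`, and `sup π₀(A(u)) ≤ Tⁿ(c)`. -/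
theorem stmt12 (T : ℝ → ℝ) (c : ℝ) (hT : IsUnimodal T c) (L : ℕ → Bool)
    (n : ℕ) (hn : 1 ≤ n) (hpar : Even (kneadOnes T c (n - 1)))
    (s u t : ℕ → Bool)
    (hsA : AdmissibleLeft T c s) (huA : AdmissibleLeft T c u) (htA : AdmissibleLeft T c t)
    (hsu : LOrd L s u) (hut : LOrd L u t)
    (hps : PrefixMatch T c s n) (hpt : PrefixMatch T c t n)
    (hst : s (n - 1) ≠ t (n - 1)) :
    PrefixMatch T c u n ∧ sSup (proj0 '' basicArc T c u) ≤ T^[n] c := by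
  -- Part 1: the combinatorial prefix match.
  obtain ⟨k1, h1a, h1b, h1c⟩ := hsu
  obtain ⟨k2, h2a, h2b, h2c⟩ := hut
  have hstEq : ∀ i < n - 1, s i = t i := fun i hi =>
    b2f_inj ((hps i hi).trans (hpt i hi).symm)
  have hk1 : n - 1 ≤ k1 := by
    by_contra hlt
    push_neg at hlt
    have htk1 : t k1 = s k1 := (hstEq k1 hlt).symm
    have hk2 : k2 = k1 := by
      rcases lt_trichotomy k2 k1 with h | h | h
      · exact absurd ((h1a k2 h).symm.trans (hstEq k2 (h.trans hlt))) h2b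
      · exact h
      · exact absurd ((h2a k1 h).trans htk1).symm h1b
    subst hk2
    have hnum : numOnes s k2 = numOnes u k2 := by
      unfold numOnes
      congr 1
      apply Finset.filter_congr
      intro i hi
      rw [h1a i (Finset.mem_range.mp hi)]
    rcases h1c with ⟨hu1, he1⟩ | ⟨hs1, ho1⟩ <;>
      rcases h2c with ⟨ht2, he2⟩ | ⟨hu2, ho2⟩
    · exact h2b (hu1.trans ht2.symm)
    · rw [hnum] at he1
      exact (Nat.not_odd_iff_even.mpr he1) ho2
    · rw [← hnum] at he2
      exact (Nat.not_odd_iff_even.mpr he2) ho1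
    · exact h1b (hs1.trans hu2.symm)
  have huseq : ∀ i < n - 1, u i = s i := fun i hi =>
    (h1a i (lt_of_lt_of_le hi hk1)).symm
  have hPM : PrefixMatch T c u n := by
    intro i hi
    rw [huseq i hi]
    exact hps i hi
  refine ⟨hPM, ?_⟩
  -- Part 2: the bound on the supremum.
  have hc01 : c ∈ Set.Icc (0:ℝ) 1 := ⟨hT.2.2.2.1.le, hT.2.2.2.2.1.le⟩
  have hTn : T^[n] c ∈ Set.Icc (0:ℝ) 1 := (hT.2.1.iterate n) hc01
  refine Real.sSup_le ?_ hTn.1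
  rintro v ⟨x, ⟨⟨hxI, hxT⟩, hxs⟩, rfl⟩
  have hx0 : ∀ a b : ℕ, T^[a] (x (a + b)) = x b := by
    intro a
    induction a with
    | zero => intro b; simp
    | succ a ih =>
      intro b
      rw [Function.iterate_succ_apply]
      have : a + 1 + b = a + b + 1 := by omega
      rw [this, hxT (a + b)]
      exact ih b
  set y := x (n - 1) with hy_def
  have hyT : y ≤ T c := by
    have h1 : T (x (n - 1 + 1)) = x (n - 1) := hxT (n - 1)
    have h2 : n - 1 + 1 = n := by omega
    rw [h2] at h1
    rw [hy_def, ← h1]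
    exact le_Tc hT (hxI n)
  have hiter : ∀ j, j ≤ n - 1 → T^[j] y = x (n - 1 - j) := by
    intro j hj
    have h0 : j + (n - 1 - j) = n - 1 := by omega
    have h2 := hx0 j (n - 1 - j)
    rw [h0] at h2
    rw [hy_def]
    exact h2
  have hsym : ∀ j < n - 1, T^[j] y = c ∨ (T^[j] y < c ∧ kneading T c j = 0) ∨
      (c < T^[j] y ∧ kneading T c j = 2) := by
    intro j hj
    have hiy : T^[j] y = x (n - 1 - j) := hiter j hj.le
    have harr : n - 2 - j + 1 = n - 1 - j := by omega
    have hS := hxs (n - 2 - j)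
    rw [harr] at hS
    have hknd : b2f (u (n - 2 - j)) = kneading T c j := by
      have := hPM (n - 2 - j) (by omega)
      rwa [show n - 2 - (n - 2 - j) = j by omega] at this
    rcases hS with h | ⟨h, hb⟩ | ⟨h, hb⟩
    · left; rw [hiy]; exact h
    · right; left
      refine ⟨by rw [hiy]; exact h, ?_⟩
      rw [← hknd, hb]; rfl
    · right; right
      refine ⟨by rw [hiy]; exact h, ?_⟩
      rw [← hknd, hb]; rfl
  have hmain := (mainInd T c hT (hxI (n - 1)) hyT (n - 1) hsym (n - 1) le_rfl).1 hpar
  have hfin : T^[n - 1] y = x 0 := by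
    have := hiter (n - 1) le_rfl
    simpa using this
  have hfin2 : T^[n - 1] (T c) = T^[n] c := by
    rw [← Function.iterate_succ_apply]
    congr 1
    omega
  rw [hfin, hfin2] at hmain
  exact hmain
end

section
/- There do not exist n ∈ ℕ and sequences s, u, t, v ∈ {0,1}^{-ℕ} with s ≺_L u ≺_L t ≺_L v such that: s_i = t_i for all i < 0 except i = −n, with s_{-(n-1)}…s_{-1} = t_{-(n-1)}…t_{-1} = c_1…c_{n-1}; and u_i = v_i for all i < 0 except i = −n, with u_{-(n-1)}…u_{-1} = v_{-(n-1)}…v_{-1} = c_1…c_{n-1}. -/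
lemma numOnes_congr {s t : ℕ → Bool} {k : ℕ} (h : ∀ i < k, s i = t i) :
    numOnes s k = numOnes t k := by
  unfold numOnes
  congr 1
  apply Finset.filter_congr
  intro i hi
  rw [Finset.mem_range] at hi
  rw [h i hi]

lemma numOnes_succ (s : ℕ → Bool) (k : ℕ) :
    numOnes s (k + 1) = numOnes s k + (if s k = true then 1 else 0) := by
  unfold numOnes
  rw [Finset.range_add_one, Finset.filter_insert]
  split
  · rw [Finset.card_insert_of_notMem (by simp)]
  · simp

lemma bool_eq_of_ne_ne {a b c : Bool} (h1 : a ≠ b) (h2 : c ≠ b) : a = c := by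
  revert h1 h2; cases a <;> cases b <;> cases c <;> decide

/-- flipping a single bit at `m < k` flips the parity of `numOnes · k`. -/
lemma numOnes_flip {s t : ℕ → Bool} {m k : ℕ} (hmk : m < k)
    (hagree : ∀ i, i ≠ m → s i = t i) (hne : s m ≠ t m) :
    Odd (numOnes s k + numOnes t k) := by
  induction k with
  | zero => omega
  | succ k ih =>
    rcases Nat.lt_succ_iff_lt_or_eq.mp hmk with h | h
    · have hodd := ih h
      have hk : s k = t k := hagree k (by omega)
      rw [numOnes_succ, numOnes_succ, hk]
      rcases hodd with ⟨a, ha⟩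
      split
      · exact ⟨a + 1, by omega⟩
      · exact ⟨a, by omega⟩
    · subst h
      have heq : numOnes s m = numOnes t m :=
        numOnes_congr fun i hi => hagree i (by omega)
      rw [numOnes_succ, numOnes_succ, heq]
      cases hs : s m <;> cases ht : t m <;> simp only [hs, ht] at hne ⊢ <;>
        simp at hne ⊢

/-- the first index of difference is unique. -/
lemma first_diff_unique {a b : ℕ → Bool} {k k' : ℕ}
    (h1 : ∀ i < k, a i = b i) (h2 : a k ≠ b k)
    (h3 : ∀ i < k', a i = b i) (h4 : a k' ≠ b k') : k = k' := by
  rcases lt_trichotomy k k' with h | h | h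
  · exact absurd (h3 k h) h2
  · exact h
  · exact absurd (h1 k' h) h4

/-- With `cseq` the fixed kneading sequence (`cseq (j-1)` representing `c_j`): there do
not exist `n ≥ 1` and sequences `s ≺_L u ≺_L t ≺_L v` in `{0,1}^{-ℕ}` such that `s` and
`t` agree everywhere except at index `-n` with common prefix
`s_{-(n-1)}…s_{-1} = t_{-(n-1)}…t_{-1} = c₁…c_{n-1}`, and likewise `u` and `v` agree
everywhere except at index `-n` with the same common prefix `c₁…c_{n-1}`. -/
theorem stmt13 (L cseq : ℕ → Bool) :
    ¬ ∃ (n : ℕ) (s u t v : ℕ → Bool), 1 ≤ n ∧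
      LOrd L s u ∧ LOrd L u t ∧ LOrd L t v ∧
      (∀ i, i ≠ n - 1 → s i = t i) ∧ s (n - 1) ≠ t (n - 1) ∧
      (∀ i < n - 1, s i = cseq (n - 2 - i)) ∧ (∀ i < n - 1, t i = cseq (n - 2 - i)) ∧
      (∀ i, i ≠ n - 1 → u i = v i) ∧ u (n - 1) ≠ v (n - 1) ∧
      (∀ i < n - 1, u i = cseq (n - 2 - i)) ∧ (∀ i < n - 1, v i = cseq (n - 2 - i)) := by
  rintro ⟨n, s, u, t, v, hn, ⟨k1, hk1a, hk1b, hk1c⟩, hut, ⟨k3, hk3a, hk3b, hk3c⟩,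
    hst, hstm, hsc, htc, huv, huvm, huc, hvc⟩
  set m := n - 1 with hm
  -- all four sequences agree below m
  have hsu_below : ∀ i < m, s i = u i := fun i hi => (hsc i hi).trans (huc i hi).symm
  have htv_below : ∀ i < m, t i = v i := fun i hi => (htc i hi).trans (hvc i hi).symm
  have hst_below : ∀ i < m, s i = t i := fun i hi => (hsc i hi).trans (htc i hi).symm
  by_cases hcase : u m = t m
  · -- s and u first differ at m; t and v first differ at m
    have hsum : s m ≠ u m := fun h => hstm (h.trans hcase)
    have htvm : t m ≠ v m := fun h => huvm (hcase.trans h)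
    have hk1 : k1 = m := first_diff_unique hk1a hk1b hsu_below hsum
    have hk3 : k3 = m := first_diff_unique hk3a hk3b htv_below htvm
    subst hk1; subst hk3
    have hP : numOnes s m = numOnes t m := numOnes_congr hst_below
    rcases hk1c with ⟨h1, e1⟩ | ⟨h1, e1⟩ <;> rcases hk3c with ⟨h3, e3⟩ | ⟨h3, e3⟩
    · exact htvm (hcase.symm.trans (h1.trans h3.symm)) |>.elim
    · rw [hP] at e1; rcases e1 with ⟨a, ha⟩; rcases e3 with ⟨b, hb⟩; omega
    · rw [hP] at e1; rcases e1 with ⟨a, ha⟩; rcases e3 with ⟨b, hb⟩; omega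
    · exact hstm (h1.trans h3.symm) |>.elim
  · -- u m = s m, so t m = v m; s,u first differ at some k > m, and so do t,v
    have hum : u m = s m := bool_eq_of_ne_ne hcase (fun h => hstm h)
    have hv : v m ≠ s m := fun h => huvm (by rw [hum, h])
    have htvm : t m = v m := bool_eq_of_ne_ne (fun h => hstm h.symm) hv
    -- s and u agree at m, so k1 > m
    have hk1m : m < k1 := by
      rcases lt_trichotomy k1 m with h | h | h
      · exact absurd (hsu_below k1 h) hk1b
      · subst h; exact absurd hum.symm hk1b
      · exact h
    -- t and v agree below k1 and differ at k1
    have htv_ag : ∀ i < k1, t i = v i := by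
      intro i hi
      by_cases him : i = m
      · subst him; exact htvm
      · rw [← hst i him, ← huv i him]; exact hk1a i hi
    have htv_ne : t k1 ≠ v k1 := by
      have hk1m' : k1 ≠ m := by omega
      rw [← hst k1 hk1m', ← huv k1 hk1m']; exact hk1b
    have hk3 : k3 = k1 := first_diff_unique hk3a hk3b htv_ag htv_ne
    rw [hk3] at hk3c
    -- parity flip between numOnes s k1 and numOnes t k1
    have hflip : Odd (numOnes s k1 + numOnes t k1) :=
      numOnes_flip hk1m hst (fun h => hstm h)
    have htk : t k1 = s k1 := (hst k1 (by omega)).symm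
    have hvk : v k1 = u k1 := (huv k1 (by omega)).symm
    rcases hk1c with ⟨h1, e1⟩ | ⟨h1, e1⟩ <;> rcases hk3c with ⟨h3, e3⟩ | ⟨h3, e3⟩
    · -- u k1 = L k1 and v k1 = L k1, i.e. u k1 = L k1; contradiction via parity
      rcases e1 with ⟨a, ha⟩; rcases e3 with ⟨b, hb⟩; rcases hflip with ⟨c, hc⟩; omega
    · -- u k1 = L k1 and t k1 = L k1, but t k1 = s k1 ≠ u k1
      exact hk1b (htk.symm.trans (h3.trans h1.symm)) |>.elim
    · -- s k1 = L k1 and v k1 = L k1 = u k1, but s k1 ≠ u k1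
      exact hk1b (h1.trans (h3.symm.trans hvk)) |>.elim
    · rcases e1 with ⟨a, ha⟩; rcases e3 with ⟨b, hb⟩; rcases hflip with ⟨c, hc⟩; omega
end
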